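/- Let d ≥ 2 and let p, k be natural numbers with 1 ≤ p < k and k + p odd, and set α = (k+p−1)/2 and β = (k−p−1)/2. Then the chromatic number of the displacement graph G(d,p,k) is at least the cardinality of the finite set C(d,α,β) ∪ T ∪ S. -/

import Mathlib

open Finset

/-- The L1 norm on the integer lattice `Fin d → ℤ`. -/
def norm1 {d : ℕ} (x : Fin d → ℤ) : ℤ := ∑ i, |x i|

/-- The first standard basis vector of `Fin d → ℤ`. -/
def e1 {d : ℕ} : Fin d → ℤ := fun i => if (i : ℕ) = 0 then 1 else 0

/-- `inN p k x y` means `y` belongs to the displaced distance-`k` neighborhood `N(x, p, k)`,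
i.e. `‖y − (x + p·e₁)‖₁ ≤ k` or `‖y − (x − p·e₁)‖₁ ≤ k`. -/
def inN {d : ℕ} (p k : ℕ) (x y : Fin d → ℤ) : Prop :=
  norm1 (y - (x + (p : ℤ) • e1)) ≤ (k : ℤ) ∨ norm1 (y - (x - (p : ℤ) • e1)) ≤ (k : ℤ)


lemma norm1_neg {d : ℕ} (x : Fin d → ℤ) : norm1 (-x) = norm1 x :=
  Finset.sum_congr rfl fun i _ => by simp

lemma inN_symm {d : ℕ} {p k : ℕ} {x y : Fin d → ℤ} (h : inN p k x y) : inN p k y x := by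
  rcases h with h | h
  · right
    have hv : x - (y - (p : ℤ) • e1) = -(y - (x + (p : ℤ) • e1)) := by abel
    rw [hv, norm1_neg]; exact h
  · left
    have hv : x - (y + (p : ℤ) • e1) = -(y - (x - (p : ℤ) • e1)) := by abel
    rw [hv, norm1_neg]; exact h

/-- The displacement graph `G(d, p, k)` on the lattice `Fin d → ℤ`:
distinct `x, y` are adjacent iff `y ∈ N(x, p, k)`. -/
def dispGraph (d p k : ℕ) : SimpleGraph (Fin d → ℤ) where
  Adj x y := x ≠ y ∧ inN p k x y
  symm := ⟨fun _ _ h => ⟨h.1.symm, inN_symm h.2⟩⟩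
  loopless := ⟨fun _ h => h.1 rfl⟩


/-- `∑_{i=2}^d |x_i|` : the sum of absolute values of all but the first coordinate. -/
def tailSum {d : ℕ} (x : Fin d → ℤ) : ℤ :=
  ∑ i ∈ Finset.univ.filter (fun i : Fin d => (i : ℕ) ≠ 0), |x i|


/-- The `j`-th coordinate (0-indexed) of a lattice point, or `0` if out of range. -/
def coord {d : ℕ} (x : Fin d → ℤ) (j : ℕ) : ℤ := if h : j < d then x ⟨j, h⟩ else 0


/-- The set `C(d, α, β) = { x : ‖x‖₁ ≤ α and ∑_{i=2}^d |x_i| ≤ β }`. -/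
def Cset (d : ℕ) (α β : ℤ) : Set (Fin d → ℤ) := {x | norm1 x ≤ α ∧ tailSum x ≤ β}


/-- The set `T = { x : −(p−1) ≤ x₁ ≤ p, 1 ≤ x₂ ≤ β, and ∑_{i=2}^d |x_i| = β+1 }`. -/
def Tset (d : ℕ) (p β : ℤ) : Set (Fin d → ℤ) :=
  {x | -(p - 1) ≤ coord x 0 ∧ coord x 0 ≤ p ∧ 1 ≤ coord x 1 ∧ coord x 1 ≤ β ∧
       tailSum x = β + 1}


/-- The set `S = { x : p+1 ≤ x₁ ≤ α+1, |x₂| ≤ β, and ‖x‖₁ = α+1 }`. -/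
def Sset (d : ℕ) (p α β : ℤ) : Set (Fin d → ℤ) :=
  {x | p + 1 ≤ coord x 0 ∧ coord x 0 ≤ α + 1 ∧ |coord x 1| ≤ β ∧ norm1 x = α + 1}


/-!
The union `C ∪ T ∪ S` is a clique of `G(d, p, k)`: if `x, y` lie in it with `x₁ ≤ y₁`, then
`y` is within L1 distance `k` of `x + p·e₁`. The triangle inequality on the coordinates
`i ≥ 3` bounds that distance by a linear expression in the first two coordinates and the
tail sums `∑_{i≥2} |x_i|`, `∑_{i≥2} |y_i|`, and the bound `≤ k` is then a case analysis of
linear inequalities, one case for each pair of the sets `C`, `T`, `S`.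
-/

lemma SimpleGraph.IsClique.ncard_le_chromaticNumber {V : Type*} {G : SimpleGraph V} {s : Set V}
    (h : G.IsClique s) : (s.ncard : ℕ∞) ≤ G.chromaticNumber := by
  rcases s.finite_or_infinite with hs | hs
  · lift s to Finset V using hs
    rw [Set.ncard_coe_finset]
    exact h.card_le_chromaticNumber
  · simp [hs.ncard]

section Lattice

variable {d : ℕ}

lemma norm1_eq_abs_add_tailSum (hd : 0 < d) (x : Fin d → ℤ) :
    norm1 x = |x ⟨0, hd⟩| + tailSum x := by
  rw [norm1, tailSum, ← add_sum_erase _ _ (mem_univ ⟨0, hd⟩)]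
  congr 1
  refine sum_congr ?_ fun _ _ => rfl
  ext i
  simp [Fin.ext_iff]

lemma tailSum_sub_le (hd : 1 < d) (x y : Fin d → ℤ) :
    tailSum (y - x) ≤
      |y ⟨1, hd⟩ - x ⟨1, hd⟩| + (tailSum x - |x ⟨1, hd⟩|) + (tailSum y - |y ⟨1, hd⟩|) := by
  have h1 : (⟨1, hd⟩ : Fin d) ∈ univ.filter fun i : Fin d => (i : ℕ) ≠ 0 := by simp
  rw [tailSum, tailSum, tailSum, ← add_sum_erase _ _ h1, ← add_sum_erase _ _ h1,
    ← add_sum_erase _ _ h1]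
  have htriangle : ∑ i ∈ (univ.filter fun i : Fin d => (i : ℕ) ≠ 0).erase ⟨1, hd⟩, |(y - x) i| ≤
      ∑ i ∈ (univ.filter fun i : Fin d => (i : ℕ) ≠ 0).erase ⟨1, hd⟩, (|x i| + |y i|) :=
    sum_le_sum fun i _ => by simpa [add_comm] using abs_sub (y i) (x i)
  rw [sum_add_distrib] at htriangle
  simp only [Pi.sub_apply] at htriangle ⊢
  linarith

lemma norm1_sub_add_smul_e1 (hd : 0 < d) (c : ℤ) (x y : Fin d → ℤ) :
    norm1 (y - (x + c • e1)) = |y ⟨0, hd⟩ - x ⟨0, hd⟩ - c| + tailSum (y - x) := by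
  rw [norm1_eq_abs_add_tailSum hd]
  congr 1
  · simp [e1, sub_sub]
  · refine sum_congr rfl fun i hi => ?_
    simp_all [e1]

end Lattice

/-- Membership in `C ∪ T ∪ S` of a point whose first two coordinates are `a`, `b` and whose
tail sum `∑_{i≥2} |x_i|` is `t`, one disjunct per set. -/
def UnionProfile (p α β a b t : ℤ) : Prop :=
  (|a| + t ≤ α ∧ t ≤ β) ∨
  (-(p - 1) ≤ a ∧ a ≤ p ∧ 1 ≤ b ∧ b ≤ β ∧ t = β + 1) ∨
  (p + 1 ≤ a ∧ a ≤ α + 1 ∧ |b| ≤ β ∧ |a| + t = α + 1)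

lemma unionProfile_of_mem {d : ℕ} (hd : 1 < d) {p α β : ℤ} {x : Fin d → ℤ}
    (hx : x ∈ Cset d α β ∪ Tset d p β ∪ Sset d p α β) :
    UnionProfile p α β (x ⟨0, by omega⟩) (x ⟨1, hd⟩) (tailSum x) := by
  have hc0 : coord x 0 = x ⟨0, by omega⟩ := dif_pos (by omega)
  have hc1 : coord x 1 = x ⟨1, hd⟩ := dif_pos hd
  rcases hx with (hC | hT) | hS
  · rw [Cset, Set.mem_ofPred_eq, norm1_eq_abs_add_tailSum (by omega)] at hC
    exact Or.inl hC
  · rw [Tset, Set.mem_ofPred_eq, hc0, hc1] at hT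
    exact Or.inr (Or.inl hT)
  · rw [Sset, Set.mem_ofPred_eq, hc0, hc1, norm1_eq_abs_add_tailSum (by omega)] at hS
    exact Or.inr (Or.inr hS)

lemma UnionProfile.abs_sub_sub_add_le {p k α β a b t a' b' t' : ℤ} (hp : 1 ≤ p)
    (hα : 2 * α = k + p - 1) (hβ : 2 * β = k - p - 1)
    (hx : UnionProfile p α β a b t) (hy : UnionProfile p α β a' b' t') (hle : a ≤ a') :
    |a' - a - p| + (|b' - b| + (t - |b|) + (t' - |b'|)) ≤ k := by
  unfold UnionProfile at hx hy
  -- `omega` treats each `|·|` as an atom, so we supply its two possible values.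
  have := abs_choice a; have := abs_choice a'; have := abs_choice b; have := abs_choice b'
  have := abs_choice (b' - b); have := abs_choice (a' - a - p)
  have := abs_nonneg a; have := abs_nonneg a'; have := abs_nonneg b; have := abs_nonneg b'
  have := abs_nonneg (b' - b); have := abs_nonneg (a' - a - p)
  omega

section Clique

variable {d p k : ℕ} {α β : ℤ}

lemma dispGraph_adj_of_mem_union_of_le (hd : 2 ≤ d) (hp : 1 ≤ p)
    (hα : 2 * α = (k : ℤ) + (p : ℤ) - 1) (hβ : 2 * β = (k : ℤ) - (p : ℤ) - 1)
    {x y : Fin d → ℤ} (hx : x ∈ Cset d α β ∪ Tset d (p : ℤ) β ∪ Sset d (p : ℤ) α β)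
    (hy : y ∈ Cset d α β ∪ Tset d (p : ℤ) β ∪ Sset d (p : ℤ) α β) (hne : x ≠ y)
    (hle : x ⟨0, by omega⟩ ≤ y ⟨0, by omega⟩) :
    (dispGraph d p k).Adj x y := by
  refine ⟨hne, Or.inl ?_⟩
  rw [norm1_sub_add_smul_e1 (by omega)]
  calc _ ≤ |y ⟨0, _⟩ - x ⟨0, _⟩ - p| + (|y ⟨1, hd⟩ - x ⟨1, hd⟩| + (tailSum x - |x ⟨1, hd⟩|)
          + (tailSum y - |y ⟨1, hd⟩|)) := by gcongr; exact tailSum_sub_le hd x y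
    _ ≤ k := (unionProfile_of_mem hd hx).abs_sub_sub_add_le (mod_cast hp) hα hβ
          (unionProfile_of_mem hd hy) hle

lemma isClique_union (hd : 2 ≤ d) (hp : 1 ≤ p)
    (hα : 2 * α = (k : ℤ) + (p : ℤ) - 1) (hβ : 2 * β = (k : ℤ) - (p : ℤ) - 1) :
    (dispGraph d p k).IsClique (Cset d α β ∪ Tset d (p : ℤ) β ∪ Sset d (p : ℤ) α β) := by
  intro x hx y hy hne
  rcases le_total (x ⟨0, by omega⟩) (y ⟨0, by omega⟩) with hle | hle
  · exact dispGraph_adj_of_mem_union_of_le hd hp hα hβ hx hy hne hle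
  · exact (dispGraph_adj_of_mem_union_of_le hd hp hα hβ hy hx hne.symm hle).symm

end Clique

theorem stmt11_general (d : ℕ) (hd : 2 ≤ d) (p k : ℕ) (hp : 1 ≤ p)
    (α β : ℤ) (hα : 2 * α = (k : ℤ) + (p : ℤ) - 1) (hβ : 2 * β = (k : ℤ) - (p : ℤ) - 1) :
    (((Cset d α β ∪ Tset d (p : ℤ) β ∪ Sset d (p : ℤ) α β).ncard : ℕ) : ℕ∞) ≤
      (dispGraph d p k).chromaticNumber :=
  (isClique_union hd hp hα hβ).ncard_le_chromaticNumber

/-- If `d ≥ 2`, `1 ≤ p < k`, `k + p` is odd, `α = (k+p−1)/2` and `β = (k−p−1)/2`, then the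
chromatic number of the displacement graph `G(d, p, k)` is at least the cardinality of
`C(d, α, β) ∪ T ∪ S`. -/
theorem stmt11 (d : ℕ) (hd : 2 ≤ d) (p k : ℕ) (hp : 1 ≤ p) (hpk : p < k)
    (hodd : Odd (k + p))
    (α β : ℤ) (hα : 2 * α = (k : ℤ) + (p : ℤ) - 1) (hβ : 2 * β = (k : ℤ) - (p : ℤ) - 1) :
    (((Cset d α β ∪ Tset d (p : ℤ) β ∪ Sset d (p : ℤ) α β).ncard : ℕ) : ℕ∞) ≤
      (dispGraph d p k).chromaticNumber :=
  stmt11_general d hd p k hp α β hα hβ
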